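/- arXiv:2004.01604 — 5 statements merged into one kernel-verified Lean document; each statement's English description precedes it below -/
import Mathlib

section
/- Let E be a Banach space, ε > 0, and (x_j) a sequence in the closed unit ball of E with ‖x_j‖ ≥ ε for all j. Define T : ℓ∞ → ℓ∞(E) by T((a_n))_j = a_{F(j+1)} x_j, where F(m) is the index of the smallest prime factor of m. Then T is a well-defined bounded injective linear map and an isomorphism onto its range. -/
open BoundedContinuousFunction Filter

/-- The index (0-based) of the smallest prime factor of `m` in the increasing
enumeration of the primes. -/
noncomputable def Findex (m : ℕ) : ℕ := Nat.count Nat.Prime m.minFac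

lemma Findex_surj (k : ℕ) : ∃ j : ℕ, Findex (j + 2) = k := by
  have hp : (Nat.nth Nat.Prime k).Prime :=
    Nat.nth_mem_of_infinite Nat.infinite_setOf_prime k
  have h2 : 2 ≤ Nat.nth Nat.Prime k := hp.two_le
  refine ⟨Nat.nth Nat.Prime k - 2, ?_⟩
  have : Nat.nth Nat.Prime k - 2 + 2 = Nat.nth Nat.Prime k := by omega
  rw [Findex, this, Nat.Prime.minFac_eq hp,
    Nat.count_nth_of_infinite Nat.infinite_setOf_prime]

/-- Jiménez-Rodríguez's operator `T : ℓ∞ → ℓ∞(E)`, `T((a_n))_j = a_{F(j+1)} x_j`,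
is a well-defined bounded injective linear map which is an isomorphism onto its range.
(Coordinates are 0-indexed here, so the paper's `j`-th coordinate, `j ≥ 1`, is our
`(j-1)`-st one and the multiplier is `a (Findex (j+1))`.) -/
theorem jimenez_operator_isomorphism_onto_range
    {E : Type*} [NormedAddCommGroup E] [NormedSpace ℝ E] [CompleteSpace E]
    (ε : ℝ) (hε : 0 < ε) (x : ℕ → E) (hx1 : ∀ j, ‖x j‖ ≤ 1) (hxε : ∀ j, ε ≤ ‖x j‖) :
    ∃ T : (ℕ →ᵇ ℝ) →L[ℝ] (ℕ →ᵇ E),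
      (∀ (a : ℕ →ᵇ ℝ) (j : ℕ), T a j = a (Findex (j + 2)) • x j) ∧
      Function.Injective T ∧
      ∃ c : ℝ, 0 < c ∧ ∀ a : ℕ →ᵇ ℝ, c * ‖a‖ ≤ ‖T a‖ := by
  have hbd : ∀ (a : ℕ →ᵇ ℝ) (j : ℕ), ‖a (Findex (j + 2)) • x j‖ ≤ ‖a‖ := by
    intro a j
    rw [norm_smul]
    calc ‖a (Findex (j + 2))‖ * ‖x j‖ ≤ ‖a‖ * 1 :=
          mul_le_mul (a.norm_coe_le_norm _) (hx1 j) (norm_nonneg _) (norm_nonneg _)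
      _ = ‖a‖ := mul_one _
  set T₀ : (ℕ →ᵇ ℝ) →ₗ[ℝ] (ℕ →ᵇ E) :=
    { toFun := fun a => BoundedContinuousFunction.ofNormedAddCommGroupDiscrete
        (fun j => a (Findex (j + 2)) • x j) ‖a‖ (hbd a)
      map_add' := by intro a b; ext j; simp [add_smul]
      map_smul' := by intro c a; ext j; simp [mul_smul] } with hT₀
  have hT₀app : ∀ (a : ℕ →ᵇ ℝ) (j : ℕ), T₀ a j = a (Findex (j + 2)) • x j := fun _ _ => rfl
  have hcont : ∀ a : ℕ →ᵇ ℝ, ‖T₀ a‖ ≤ 1 * ‖a‖ := by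
    intro a
    rw [one_mul]
    exact (T₀ a).norm_le (norm_nonneg a) |>.2 (hbd a)
  have hlow : ∀ a : ℕ →ᵇ ℝ, ε * ‖a‖ ≤ ‖T₀ a‖ := by
    intro a
    rw [mul_comm, ← le_div_iff₀ hε]
    refine a.norm_le (div_nonneg (norm_nonneg _) hε.le) |>.2 fun k => ?_
    obtain ⟨j, hj⟩ := Findex_surj k
    rw [le_div_iff₀ hε]
    calc ‖a k‖ * ε ≤ ‖a k‖ * ‖x j‖ :=
          mul_le_mul_of_nonneg_left (hxε j) (norm_nonneg _)
      _ = ‖T₀ a j‖ := by rw [hT₀app, norm_smul, hj]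
      _ ≤ ‖T₀ a‖ := (T₀ a).norm_coe_le_norm j
  refine ⟨T₀.mkContinuous 1 hcont, fun a j => rfl, fun a b hab => ?_, ε, hε, hlow⟩
  have h0 : T₀ (a - b) = 0 := by
    have : T₀ a = T₀ b := hab
    rw [map_sub, this, sub_self]
  have := hlow (a - b)
  rw [h0, norm_zero] at this
  have : ‖a - b‖ ≤ 0 := by nlinarith [norm_nonneg (a - b)]
  rw [← sub_eq_zero]
  exact norm_le_zero_iff.mp this
end

section
/- Let E be a Banach space, ε > 0, and (x_j) a sequence in B_E with ‖x_j‖ ≥ ε for all j. With T : ℓ∞ → ℓ∞(E), T((a_n))_j = a_{F(j+1)} x_j as above, every nonzero element of the range of T is a sequence in E that does not converge to 0 in norm. -/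
open Filter

/-!
A nonzero coordinate `a k` is the multiplier of `x j` whenever `j + 2` is a power of the `k`-th
prime, so infinitely many terms of the sequence have norm at least `|a k| * ε`.
-/

theorem Findex_nth_prime_pow (k : ℕ) {n : ℕ} (hn : n ≠ 0) :
    Findex (Nat.nth Nat.Prime k ^ n) = k := by
  rw [Findex, (Nat.prime_nth_prime k).pow_minFac hn]
  exact Nat.count_nth_of_infinite Nat.infinite_setOfPred_prime k

theorem frequently_Findex_add_two_eq (k : ℕ) : ∃ᶠ j in atTop, Findex (j + 2) = k := by
  set p := Nat.nth Nat.Prime k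
  have hp : 2 ≤ p := (Nat.prime_nth_prime k).two_le
  refine frequently_atTop.2 fun m => ⟨p ^ (m + 2) - 2, ?_, ?_⟩
  · have : m + 2 < 2 ^ (m + 2) := Nat.lt_two_pow_self
    have : 2 ^ (m + 2) ≤ p ^ (m + 2) := Nat.pow_le_pow_left hp _
    omega
  · have : 2 ≤ p ^ (m + 2) := hp.trans (Nat.le_self_pow (by omega) p)
    rw [Nat.sub_add_cancel this, Findex_nth_prime_pow k (by omega)]

theorem not_tendsto_zero_of_frequently_le_norm {ι F : Type*} [SeminormedAddGroup F]
    {l : Filter ι} {f : ι → F} {δ : ℝ} (hδ : 0 < δ) (h : ∃ᶠ i in l, δ ≤ ‖f i‖) :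
    ¬Tendsto f l (nhds 0) := fun hf =>
  h <| ((tendsto_zero_iff_norm_tendsto_zero.1 hf).eventually (gt_mem_nhds hδ)).mono
    fun _ => not_le.2

theorem jimenez_range_not_norm_null_general
    {E : Type*} [NormedAddCommGroup E] [NormedSpace ℝ E]
    (ε : ℝ) (hε : 0 < ε) (x : ℕ → E) (hxε : ∀ j, ε ≤ ‖x j‖)
    (a : ℕ → ℝ) (ha0 : a ≠ 0) :
    ¬ Tendsto (fun j : ℕ => a (Findex (j + 2)) • x j) atTop (nhds 0) := by
  obtain ⟨k, hk⟩ := Function.ne_iff.1 ha0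
  refine not_tendsto_zero_of_frequently_le_norm (mul_pos (abs_pos.2 hk) hε) ?_
  refine (frequently_Findex_add_two_eq k).mono fun j hj => ?_
  rw [hj, norm_smul, Real.norm_eq_abs]
  exact mul_le_mul_of_nonneg_left (hxε j) (abs_nonneg _)

/-- Every nonzero element of the range of the operator
`T((a_n))_j = a_{F(j+1)} x_j` is an `E`-valued sequence that is not norm null.
(0-indexed coordinates: the `j`-th coordinate carries the multiplier `a (Findex (j+2))`.) -/
theorem jimenez_range_not_norm_null
    {E : Type*} [NormedAddCommGroup E] [NormedSpace ℝ E] [CompleteSpace E]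
    (ε : ℝ) (hε : 0 < ε) (x : ℕ → E) (hx1 : ∀ j, ‖x j‖ ≤ 1) (hxε : ∀ j, ε ≤ ‖x j‖)
    (a : ℕ → ℝ) (ha : Bornology.IsBounded (Set.range a)) (ha0 : a ≠ 0) :
    ¬ Tendsto (fun j : ℕ => a (Findex (j + 2)) • x j) atTop (nhds 0) :=
  jimenez_range_not_norm_null_general ε hε x hxε a ha0
end

section
/- Let E be a Banach space that is not polynomially Schur, i.e., there exists a polynomially null sequence in E that is not norm null. Then the set of E-valued non-norm-null polynomially null sequences is spaceable in c_0^w(E): there is a closed infinite-dimensional linear subspace of c_0^w(E) all of whose nonzero elements are polynomially null non-norm-null sequences. -/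
open BoundedContinuousFunction Filter

/-- A sequence in a Banach space `E` is polynomially null if `P (x j) → 0` for every
continuous scalar-valued `n`-homogeneous polynomial `P` (`n ≥ 1`), i.e. for the
diagonal restriction of every continuous `n`-linear form. -/
def PolyNull {E : Type*} [NormedAddCommGroup E] [NormedSpace ℝ E] (x : ℕ → E) : Prop :=
  ∀ (n : ℕ), 1 ≤ n → ∀ M : ContinuousMultilinearMap ℝ (fun _ : Fin n => E) ℝ,
    Tendsto (fun j => M (fun _ => x j)) atTop (nhds 0)

/-!
Normalising a subsequence of the given sequence that stays away from `0` yields a polynomially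
null sequence `y` of unit vectors. Multiplying by a bounded scalar sequence preserves polynomial
nullity, since an `n`-homogeneous polynomial scales by the `n`-th power of the scalar. Via
`ℕ ≃ ℕ × ℕ`, send `a ∈ ℓ∞` to `(a i • y (i, k))_(i, k)`: this is a linear isometry into `ℓ∞(E)`
with polynomially null values, and each nonzero coordinate `a i` recurs at infinitely many
indices, so `T a` is not norm null.
-/

open Topology

theorem exists_frequently_le_norm_of_not_tendsto_zero {E : Type*} [NormedAddCommGroup E]
    {x : ℕ → E} (hx : ¬Tendsto x atTop (𝓝 0)) : ∃ ε > 0, ∃ᶠ j in atTop, ε ≤ ‖x j‖ := by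
  rw [NormedAddGroup.tendsto_nhds_zero] at hx
  push Not at hx
  simpa only [not_eventually, not_lt] using hx

section
variable {E : Type*} [NormedAddCommGroup E] [NormedSpace ℝ E]

theorem PolyNull.comp_tendsto {x : ℕ → E} (hx : PolyNull x) {φ : ℕ → ℕ}
    (hφ : Tendsto φ atTop atTop) : PolyNull (x ∘ φ) :=
  fun n hn M => (hx n hn M).comp hφ

theorem PolyNull.smul_of_norm_le {x : ℕ → E} (hx : PolyNull x) {c : ℕ → ℝ} {C : ℝ}
    (hc : ∀ j, ‖c j‖ ≤ C) : PolyNull (fun j => c j • x j) := by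
  intro n hn M
  have hM : ∀ j, M (fun _ => c j • x j) = c j ^ n * M (fun _ => x j) := fun j => by
    simpa using M.map_smul_univ (fun _ => c j) (fun _ => x j)
  refine squeeze_zero_norm (fun j => ?_) (by simpa using (hx n hn M).norm.const_mul (C ^ n))
  rw [hM, norm_mul, norm_pow]
  exact mul_le_mul_of_nonneg_right (pow_le_pow_left₀ (norm_nonneg _) (hc j) n) (norm_nonneg _)

theorem PolyNull.exists_norm_eq_one {x : ℕ → E} (hx : PolyNull x)
    (hx0 : ¬Tendsto x atTop (𝓝 0)) : ∃ y : ℕ → E, PolyNull y ∧ ∀ j, ‖y j‖ = 1 := by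
  obtain ⟨ε, hε, hfreq⟩ := exists_frequently_le_norm_of_not_tendsto_zero hx0
  obtain ⟨φ, hφ, hεφ⟩ := extraction_of_frequently_atTop hfreq
  have hpos : ∀ j, 0 < ‖x (φ j)‖ := fun j => hε.trans_le (hεφ j)
  refine ⟨fun j => ‖x (φ j)‖⁻¹ • x (φ j),
    (hx.comp_tendsto hφ.tendsto_atTop).smul_of_norm_le (C := ε⁻¹) fun j => ?_, fun j => ?_⟩
  · rw [norm_inv, norm_norm]
    exact inv_anti₀ hε (hεφ j)
  · rw [norm_smul, norm_inv, norm_norm, inv_mul_cancel₀ (hpos j).ne']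

noncomputable def spreadSMul (y : ℕ →ᵇ E) : (ℕ →ᵇ ℝ) →L[ℝ] (ℕ →ᵇ E) :=
  LinearMap.mkContinuous
    { toFun a := ofNormedAddCommGroupDiscrete (fun j => a (Nat.unpair j).1 • y j) (‖y‖ * ‖a‖)
        fun j => (norm_smul_le _ _).trans <| by
          rw [mul_comm]; gcongr <;> exact norm_coe_le_norm _ _
      map_add' a b := by ext; simp [add_smul]
      map_smul' c a := by ext; simp [smul_smul] }
    ‖y‖ fun a => (norm_le (by positivity)).2 fun _ => (norm_smul_le _ _).trans <| by
      rw [mul_comm]; gcongr <;> exact norm_coe_le_norm _ _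

theorem spreadSMul_apply (y : ℕ →ᵇ E) (a : ℕ →ᵇ ℝ) (j : ℕ) :
    spreadSMul y a j = a (Nat.unpair j).1 • y j := rfl

variable {y : ℕ →ᵇ E}

theorem norm_spreadSMul_pair (hy : ∀ j, ‖y j‖ = 1) (a : ℕ →ᵇ ℝ) (i k : ℕ) :
    ‖spreadSMul y a (Nat.pair i k)‖ = ‖a i‖ := by
  rw [spreadSMul_apply, Nat.unpair_pair, norm_smul, hy, mul_one]

theorem norm_spreadSMul (hy : ∀ j, ‖y j‖ = 1) (a : ℕ →ᵇ ℝ) : ‖spreadSMul y a‖ = ‖a‖ := by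
  refine le_antisymm ((norm_le (norm_nonneg a)).2 fun j => ?_) ?_
  · rw [spreadSMul_apply, norm_smul, hy, mul_one]
    exact norm_coe_le_norm a _
  · refine (norm_le (norm_nonneg _)).2 fun i => ?_
    rw [← norm_spreadSMul_pair hy a i 0]
    exact norm_coe_le_norm _ _

theorem isometry_spreadSMul (hy : ∀ j, ‖y j‖ = 1) : Isometry (spreadSMul y) :=
  AddMonoidHomClass.isometry_of_norm _ (norm_spreadSMul hy)

theorem PolyNull.spreadSMul (hy : PolyNull y) (a : ℕ →ᵇ ℝ) : PolyNull (spreadSMul y a) :=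
  hy.smul_of_norm_le fun _ => norm_coe_le_norm a _

theorem not_tendsto_spreadSMul_zero (hy : ∀ j, ‖y j‖ = 1) {a : ℕ →ᵇ ℝ} (ha : a ≠ 0) :
    ¬Tendsto (spreadSMul y a) atTop (𝓝 0) := by
  intro h
  obtain ⟨i, hi⟩ : ∃ i, a i ≠ 0 := by simpa [BoundedContinuousFunction.ext_iff] using ha
  have hpair : Tendsto (Nat.pair i) atTop atTop :=
    StrictMono.tendsto_atTop fun _ _ => Nat.pair_lt_pair_right i
  have := (h.comp hpair).norm
  simp only [Function.comp_def, norm_spreadSMul_pair hy, norm_zero] at this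
  exact hi (norm_eq_zero.1 (tendsto_const_nhds_iff.1 this))

end

/-- Spaceability in `c_0^w(E)` is witnessed by an isomorphic copy of `ℓ∞`; it lies in
`c_0^w(E)` because polynomially null sequences are weakly null (take `n = 1`). -/
theorem polyNull_nonNormNull_spaceable_general
    {E : Type*} [NormedAddCommGroup E] [NormedSpace ℝ E]
    (h : ∃ x : ℕ → E, PolyNull x ∧ ¬ Tendsto x atTop (nhds 0)) :
    ∃ T : (ℕ →ᵇ ℝ) →L[ℝ] (ℕ →ᵇ E),
      Function.Injective T ∧
      (∃ c : ℝ, 0 < c ∧ ∀ a, c * ‖a‖ ≤ ‖T a‖) ∧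
      IsClosed (Set.range T) ∧
      (∀ a : ℕ →ᵇ ℝ, a ≠ 0 →
        PolyNull (fun j => T a j) ∧ ¬ Tendsto (fun j => T a j) atTop (nhds 0)) := by
  obtain ⟨x, hx, hx0⟩ := h
  obtain ⟨y, hy, hy1⟩ := hx.exists_norm_eq_one hx0
  set Y := ofNormedAddCommGroupDiscrete y 1 fun j => (hy1 j).le
  have hiso := isometry_spreadSMul (y := Y) hy1
  refine ⟨spreadSMul Y, hiso.injective, ⟨1, one_pos, fun a => ?_⟩,
    hiso.isClosedEmbedding.isClosed_range,
    fun a ha => ⟨hy.spreadSMul a, not_tendsto_spreadSMul_zero hy1 ha⟩⟩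
  rw [one_mul, norm_spreadSMul hy1]

/-- If `E` is not polynomially Schur (there is a polynomially null sequence that is not
norm null), then the set of non-norm-null polynomially null `E`-valued sequences is
spaceable in `c_0^w(E)`: it contains, up to the origin, a closed infinite-dimensional
subspace of `c_0^w(E)` (the range of an injective bounded linear map `T : ℓ∞ → ℓ∞(E)`
which is an isomorphism onto its closed range; polynomially null sequences are in
particular weakly null, so this range lies in `c_0^w(E)`). -/
theorem polyNull_nonNormNull_spaceable
    {E : Type*} [NormedAddCommGroup E] [NormedSpace ℝ E] [CompleteSpace E]
    (h : ∃ x : ℕ → E, PolyNull x ∧ ¬ Tendsto x atTop (nhds 0)) :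
    ∃ T : (ℕ →ᵇ ℝ) →L[ℝ] (ℕ →ᵇ E),
      Function.Injective T ∧
      (∃ c : ℝ, 0 < c ∧ ∀ a, c * ‖a‖ ≤ ‖T a‖) ∧
      IsClosed (Set.range T) ∧
      (∀ a : ℕ →ᵇ ℝ, a ≠ 0 →
        PolyNull (fun j => T a j) ∧ ¬ Tendsto (fun j => T a j) atTop (nhds 0)) :=
  polyNull_nonNormNull_spaceable_general h
end

section
/- For every infinite-dimensional Banach lattice E, the set of E-valued pairwise disjoint norm-null sequences with all nonzero terms is completely latticeable in c_0(E): there is a closed infinite-dimensional sublattice of c_0(E), lattice isometric to c_0, all of whose nonzero elements are disjoint norm-null sequences. -/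
open BoundedContinuousFunction Filter

/-!
If a normed lattice `E` has no infinite sequence of pairwise disjoint positive elements, then
below every positive element sits an atom (otherwise repeated splitting produces such a
sequence), and a maximal disjoint family `M` of atoms is finite. For `x ≥ 0` and an atom `a`,
the largest `t` with `t • a ≤ x` leaves `x - t • a` disjoint from `a`, because `[0, a]` is totally
ordered and the positive cone is closed; hence `x - ∑ τ_a • a` is disjoint from all of `M`, so
it vanishes, and `M` spans `E`. Thus an infinite-dimensional `E` has a disjoint sequence `(e_j)`
of positive unit vectors, and the diagonal map `(a_j) ↦ (a_j • e_j)` is an isometric lattice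
homomorphism `ℓ∞ → ℓ∞(E)` carrying `c₀` onto a closed sublattice of disjoint null sequences.
-/

section LatticeOrderedGroup

variable {E : Type*} [Lattice E] [AddCommGroup E]

def IsRieszAtom (a : E) : Prop :=
  0 < a ∧ ∀ ⦃u v : E⦄, 0 ≤ u → 0 ≤ v → u ≤ a → v ≤ a → u ⊓ v = 0 → u = 0 ∨ v = 0

theorem exists_seq_pairwise_inf_eq_zero_of_forall_not_isRieszAtom {e : E} (he : 0 < e)
    (h : ∀ x, 0 < x → x ≤ e → ¬ IsRieszAtom x) :
    ∃ x : ℕ → E, (∀ n, 0 < x n) ∧ Pairwise fun i j => x i ⊓ x j = 0 := by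
  have hsplit : ∀ x, 0 < x → x ≤ e → ∃ u v : E, 0 < u ∧ 0 < v ∧ u ≤ x ∧ v ≤ x ∧ u ⊓ v = 0 := by
    intro x hx hxe
    obtain ⟨u, v, hu, hv, hux, hvx, huv, hne⟩ : ∃ u v : E, 0 ≤ u ∧ 0 ≤ v ∧ u ≤ x ∧ v ≤ x ∧
        u ⊓ v = 0 ∧ u ≠ 0 ∧ v ≠ 0 := by
      simpa [IsRieszAtom, hx] using h x hx hxe
    exact ⟨u, v, hu.lt_of_ne' hne.1, hv.lt_of_ne' hne.2, hux, hvx, huv⟩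
  choose! u v hu hv hux hvx huv using hsplit
  -- `g` is the nested sequence `e ≥ v e ≥ v (v e) ≥ ⋯`; the pieces `u (g n)` are split off it.
  set g : ℕ → E := fun n => v^[n] e
  have hg_succ : ∀ n, g (n + 1) = v (g n) := fun n => Function.iterate_succ_apply' v n e
  have hg : ∀ n, 0 < g n ∧ g n ≤ e := by
    intro n
    induction n with
    | zero => exact ⟨he, le_rfl⟩
    | succ n ih => exact hg_succ n ▸ ⟨hv _ ih.1 ih.2, (hvx _ ih.1 ih.2).trans ih.2⟩
  have hg_anti : Antitone g :=
    antitone_nat_of_succ_le fun n => (hg_succ n).trans_le (hvx _ (hg n).1 (hg n).2)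
  have hdisj : ∀ i j, i < j → u (g i) ⊓ u (g j) = 0 := by
    intro i j hij
    refine le_antisymm ?_ (le_inf (hu _ (hg i).1 (hg i).2).le (hu _ (hg j).1 (hg j).2).le)
    calc u (g i) ⊓ u (g j) ≤ u (g i) ⊓ v (g i) := by
          gcongr
          exact (hux _ (hg j).1 (hg j).2).trans ((hg_anti hij).trans_eq (hg_succ i))
      _ = 0 := huv _ (hg i).1 (hg i).2
  refine ⟨fun n => u (g n), fun n => hu _ (hg n).1 (hg n).2, fun i j hij => ?_⟩
  rcases hij.lt_or_gt with hlt | hlt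
  · exact hdisj i j hlt
  · exact inf_comm (u (g i)) _ ▸ hdisj j i hlt

variable [IsOrderedAddMonoid E]

theorem add_inf_le_inf_add_inf {a b c : E} (ha : 0 ≤ a) (hb : 0 ≤ b) (hc : 0 ≤ c) :
    (a + b) ⊓ c ≤ a ⊓ c + b ⊓ c := by
  rw [inf_add, add_inf, add_inf]
  exact le_inf (le_inf inf_le_left (inf_le_right.trans (le_add_of_nonneg_left ha)))
    (le_inf (inf_le_right.trans (le_add_of_nonneg_right hb))
      (inf_le_right.trans (le_add_of_nonneg_right hc)))

theorem IsRieszAtom.le_total {a u v : E} (ha : IsRieszAtom a) (hu0 : 0 ≤ u) (hua : u ≤ a)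
    (hv0 : 0 ≤ v) (hva : v ≤ a) : u ≤ v ∨ v ≤ u := by
  have hpos : (u - v)⁺ ≤ a := sup_le ((sub_le_self u hv0).trans hua) ha.1.le
  have hneg : (u - v)⁻ ≤ a :=
    sup_le ((neg_sub u v).trans_le ((sub_le_self v hu0).trans hva)) ha.1.le
  rcases ha.2 (posPart_nonneg _) (negPart_nonneg _) hpos hneg (posPart_inf_negPart_eq_zero _)
    with h | h
  · exact .inl (sub_nonpos.1 (posPart_eq_zero.1 h))
  · exact .inr (sub_nonneg.1 (negPart_eq_zero.1 h))

end LatticeOrderedGroup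

section DisjointComplement

variable {E : Type*} [Lattice E] [AddCommGroup E] [Module ℝ E] [PosSMulStrictMono ℝ E]

theorem abs_smul_le (c : ℝ) (x : E) : |c • x| ≤ |c| • |x| := by
  have key : ∀ y : E, c • y ≤ |c| • |y| := fun y => by
    rcases le_total 0 c with hc | hc
    · rw [abs_of_nonneg hc]
      exact smul_le_smul_of_nonneg_left (le_abs_self y) hc
    · rw [abs_of_nonpos hc, ← neg_smul_neg]
      exact smul_le_smul_of_nonneg_left (neg_le_abs y) (neg_nonneg.2 hc)
  exact abs_le'.2 ⟨key x, by simpa only [smul_neg, abs_neg] using key (-x)⟩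

variable [IsOrderedAddMonoid E]

theorem smul_inf_eq_zero {u v : E} (hu : 0 ≤ u) (hv : 0 ≤ v) (huv : u ⊓ v = 0) {s : ℝ}
    (hs : 0 ≤ s) : s • u ⊓ v = 0 := by
  refine le_antisymm ?_ (le_inf (smul_nonneg hs hu) hv)
  calc s • u ⊓ v ≤ (s + 1) • u ⊓ (s + 1) • v :=
        inf_le_inf (smul_le_smul_of_nonneg_right (by linarith) hu)
          (le_smul_of_one_le_left hv (by linarith))
    _ = (s + 1) • (u ⊓ v) :=
        ((OrderIso.smulRight (by positivity : (0 : ℝ) < s + 1)).map_inf u v).symm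
    _ = 0 := by rw [huv, smul_zero]

def disjointComplement (a : E) : Submodule ℝ E where
  carrier := {x | |x| ⊓ |a| = 0}
  zero_mem' := by simp [abs_nonneg]
  add_mem' {x y} hx hy := by
    refine le_antisymm ?_ (le_inf (abs_nonneg _) (abs_nonneg _))
    calc |x + y| ⊓ |a| ≤ (|x| + |y|) ⊓ |a| := inf_le_inf_right _ (abs_add_le x y)
      _ ≤ |x| ⊓ |a| + |y| ⊓ |a| :=
          add_inf_le_inf_add_inf (abs_nonneg _) (abs_nonneg _) (abs_nonneg _)
      _ = 0 := by rw [hx, hy, add_zero]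
  smul_mem' c x hx := by
    refine le_antisymm ?_ (le_inf (abs_nonneg _) (abs_nonneg _))
    calc |c • x| ⊓ |a| ≤ (|c| • |x|) ⊓ |a| := inf_le_inf_right _ (abs_smul_le c x)
      _ = 0 := smul_inf_eq_zero (abs_nonneg _) (abs_nonneg _) hx (abs_nonneg _)

@[simp]
theorem mem_disjointComplement {a x : E} : x ∈ disjointComplement a ↔ |x| ⊓ |a| = 0 := Iff.rfl

theorem mem_disjointComplement_comm {a x : E} :
    x ∈ disjointComplement a ↔ a ∈ disjointComplement x := by
  simp only [mem_disjointComplement, inf_comm]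

theorem mem_disjointComplement_of_abs_le {a x y : E} (hyx : |y| ≤ |x|)
    (hx : x ∈ disjointComplement a) : y ∈ disjointComplement a :=
  le_antisymm ((inf_le_inf_right _ hyx).trans_eq hx) (le_inf (abs_nonneg _) (abs_nonneg _))

theorem mem_disjointComplement_iff_of_nonneg {a x : E} (hx : 0 ≤ x) (ha : 0 ≤ a) :
    x ∈ disjointComplement a ↔ x ⊓ a = 0 := by
  rw [mem_disjointComplement, abs_of_nonneg hx, abs_of_nonneg ha]

theorem smul_mem_disjointComplement_smul {x y : E} (h : x ∈ disjointComplement y) (c d : ℝ) :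
    c • x ∈ disjointComplement (d • y) :=
  Submodule.smul_mem _ _ (mem_disjointComplement_comm.1
    (Submodule.smul_mem _ _ (mem_disjointComplement_comm.1 h)))

end DisjointComplement

section NormedLattice

variable {E : Type*} [NormedAddCommGroup E] [Lattice E] [HasSolidNorm E] [IsOrderedAddMonoid E]
  [NormedSpace ℝ E] [PosSMulStrictMono ℝ E]

theorem IsRieszAtom.exists_sub_smul_mem_disjointComplement {a x : E} (ha : IsRieszAtom a)
    (hx : 0 ≤ x) : ∃ t : ℝ, x - t • a ∈ disjointComplement a := by
  set A : Set ℝ := {s | 0 ≤ s ∧ s • a ≤ x}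
  have hA_closed : IsClosed A :=
    isClosed_Ici.inter (isClosed_le (continuous_id.smul continuous_const) continuous_const)
  have hA_bdd : BddAbove A := by
    refine ⟨‖x‖ / ‖a‖, fun s ⟨hs, hsx⟩ => (le_div_iff₀ (norm_pos_iff.2 ha.1.ne')).2 ?_⟩
    calc s * ‖a‖ = ‖s • a‖ := by rw [norm_smul, Real.norm_of_nonneg hs]
      _ ≤ ‖x‖ := norm_le_norm_of_abs_le_abs (by
          rwa [abs_of_nonneg (smul_nonneg hs ha.1.le), abs_of_nonneg hx])
  obtain ⟨ht0, hta⟩ : sSup A ∈ A := hA_closed.csSup_mem ⟨0, le_rfl, by simpa using hx⟩ hA_bdd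
  set t := sSup A
  have hw : 0 ≤ x - t • a := sub_nonneg.2 hta
  refine ⟨t, (mem_disjointComplement_iff_of_nonneg hw ha.1.le).2 ?_⟩
  -- In `[0, a]` any two elements are comparable, and `ε • a ≤ x - t • a` would contradict the
  -- maximality of `t`.
  have hsmall : ∀ ε ∈ Set.Ioc (0 : ℝ) 1, (x - t • a) ⊓ a ≤ ε • a := by
    rintro ε ⟨hε0, hε1⟩
    refine (ha.le_total (le_inf hw ha.1.le) inf_le_right (smul_nonneg hε0.le ha.1.le)
      (smul_le_of_le_one_left ha.1.le hε1)).resolve_right fun hle => ?_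
    have hmem : t + ε ∈ A :=
      ⟨by positivity, add_smul t ε a ▸ le_sub_iff_add_le'.1 (hle.trans inf_le_left)⟩
    linarith [le_csSup hA_bdd hmem]
  have hzero : (x - t • a) ⊓ a ≤ (0 : ℝ) • a :=
    (isClosed_le continuous_const (continuous_id.smul continuous_const)).closure_subset_iff.2
      hsmall (by rw [closure_Ioc zero_ne_one]; exact ⟨le_rfl, zero_le_one⟩)
  exact le_antisymm (by simpa using hzero) (le_inf hw ha.1.le)

theorem span_eq_top_of_isRieszAtom {M : Set E} (hfin : M.Finite)
    (hatom : ∀ a ∈ M, IsRieszAtom a) (hdisj : M.Pairwise fun a b => a ∈ disjointComplement b)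
    (hmax : ∀ x, (∀ a ∈ M, x ∈ disjointComplement a) → x = 0) :
    Submodule.span ℝ M = ⊤ := by
  classical
  have hnonneg : ∀ x : E, 0 ≤ x → x ∈ Submodule.span ℝ M := by
    intro x hx
    choose! τ hτ using fun a (ha : a ∈ M) => (hatom a ha).exists_sub_smul_mem_disjointComplement hx
    set s := hfin.toFinset
    -- `x - ∑ τ b • b = (x - τ a • a) - ∑_{b ≠ a} τ b • b` and every term is disjoint from `a`
    have hx_eq : x - ∑ b ∈ s, τ b • b = 0 := hmax _ fun a ha => by
      rw [← Finset.add_sum_erase s _ (hfin.mem_toFinset.2 ha), ← sub_sub]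
      refine sub_mem (hτ a ha) (sum_mem fun b hb => Submodule.smul_mem _ _ ?_)
      obtain ⟨hba, hb⟩ := Finset.mem_erase.1 hb
      exact hdisj (hfin.mem_toFinset.1 hb) ha hba
    rw [sub_eq_zero.1 hx_eq]
    exact sum_mem fun b hb =>
      Submodule.smul_mem _ _ (Submodule.subset_span (hfin.mem_toFinset.1 hb))
  refine Submodule.eq_top_iff'.2 fun x => ?_
  rw [← posPart_sub_negPart x]
  exact sub_mem (hnonneg _ (posPart_nonneg x)) (hnonneg _ (negPart_nonneg x))

theorem exists_maximal_pairwise_disjoint_isRieszAtom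
    (hatoms : ∀ e : E, 0 < e → ∃ a, IsRieszAtom a ∧ a ≤ e) :
    ∃ M : Set E, (∀ a ∈ M, IsRieszAtom a) ∧ (M.Pairwise fun a b => a ∈ disjointComplement b) ∧
      ∀ x, (∀ a ∈ M, x ∈ disjointComplement a) → x = 0 := by
  set 𝒜 : Set (Set E) :=
    {S | (∀ a ∈ S, IsRieszAtom a) ∧ S.Pairwise fun a b => a ∈ disjointComplement b}
  obtain ⟨M, hM⟩ := zorn_subset 𝒜 fun c hc hchain => ⟨⋃₀ c,
      ⟨fun a ⟨s, hs, has⟩ => (hc hs).1 a has,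
        (Set.pairwise_sUnion hchain.directedOn).2 fun s hs => (hc hs).2⟩,
      fun s hs => Set.subset_sUnion_of_mem hs⟩
  refine ⟨M, hM.prop.1, hM.prop.2, fun x hx => ?_⟩
  by_contra hx0
  have hx_pos : 0 < |x| := (abs_nonneg x).lt_of_ne' fun h =>
    hx0 (norm_eq_zero.1 (by rw [← norm_abs_eq_norm, h, norm_zero]))
  obtain ⟨y, hy, hyx⟩ := hatoms _ hx_pos
  have hyM : ∀ a ∈ M, y ∈ disjointComplement a := fun a ha =>
    mem_disjointComplement_of_abs_le (by rwa [abs_of_pos hy.1]) (hx a ha)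
  have hins : insert y M ∈ 𝒜 :=
    ⟨Set.forall_mem_insert.2 ⟨hy, hM.prop.1⟩, hM.prop.2.insert fun b hb _ =>
      ⟨hyM b hb, mem_disjointComplement_comm.1 (hyM b hb)⟩⟩
  have hy_self := hyM y (hM.eq_of_subset hins (Set.subset_insert y M) ▸ Set.mem_insert y M)
  rw [mem_disjointComplement, inf_idem, abs_of_pos hy.1] at hy_self
  exact hy.1.ne' hy_self

theorem exists_seq_pos_pairwise_disjoint (h : ¬ FiniteDimensional ℝ E) :
    ∃ x : ℕ → E, (∀ n, 0 < x n) ∧ Pairwise fun i j => x i ∈ disjointComplement (x j) := by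
  by_contra hno
  have hatoms : ∀ e : E, 0 < e → ∃ a, IsRieszAtom a ∧ a ≤ e := by
    intro e he
    by_contra! hnone
    obtain ⟨x, hx, hxd⟩ := exists_seq_pairwise_inf_eq_zero_of_forall_not_isRieszAtom he
      fun x _ hxe hxa => hnone x hxa hxe
    exact hno ⟨x, hx, fun i j hij =>
      (mem_disjointComplement_iff_of_nonneg (hx i).le (hx j).le).2 (hxd hij)⟩
  obtain ⟨M, hatom, hdisj, hmax⟩ := exists_maximal_pairwise_disjoint_isRieszAtom hatoms
  have hfin : M.Finite := by
    by_contra hinf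
    let f := Set.Infinite.natEmbedding M hinf
    exact hno ⟨fun n => f n, fun n => (hatom _ (f n).2).1,
      fun i j hij => hdisj (f i).2 (f j).2 (Subtype.coe_injective.ne (f.injective.ne hij))⟩
  exact h (Module.finite_def.2 (Submodule.fg_def.2
    ⟨M, hfin, span_eq_top_of_isRieszAtom hfin hatom hdisj hmax⟩))

theorem exists_seq_nonneg_norm_eq_one_pairwise_disjoint (h : ¬ FiniteDimensional ℝ E) :
    ∃ e : ℕ → E, (∀ n, 0 ≤ e n) ∧ (∀ n, ‖e n‖ = 1) ∧
      Pairwise fun i j => e i ∈ disjointComplement (e j) := by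
  obtain ⟨x, hx, hdisj⟩ := exists_seq_pos_pairwise_disjoint h
  exact ⟨fun n => ‖x n‖⁻¹ • x n, fun n => smul_nonneg (by positivity) (hx n).le,
    fun n => norm_smul_inv_norm (hx n).ne',
    fun i j hij => smul_mem_disjointComplement_smul (hdisj hij) _ _⟩

end NormedLattice

theorem BoundedContinuousFunction.isClosed_setOf_tendsto_cocompact_zero {α β : Type*}
    [TopologicalSpace α] [PseudoMetricSpace β] [Zero β] :
    IsClosed {f : α →ᵇ β | Tendsto f (cocompact α) (nhds 0)} := by
  convert ZeroAtInftyContinuousMap.isClosed_range_toBCF (α := α) (β := β)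
  ext f
  exact ⟨fun hf => ⟨⟨f.toContinuousMap, hf⟩, rfl⟩, by rintro ⟨g, rfl⟩; exact g.zero_at_infty'⟩

section DiagonalOperator

variable {ι E : Type*} [TopologicalSpace ι] [DiscreteTopology ι] [NormedAddCommGroup E]
  [NormedSpace ℝ E] {e : ι → E} (he : ∀ i, ‖e i‖ = 1)

noncomputable def diagonalCLM : (ι →ᵇ ℝ) →L[ℝ] (ι →ᵇ E) :=
  LinearMap.mkContinuous
    { toFun a := ofNormedAddCommGroupDiscrete (fun i => a i • e i) ‖a‖ fun i => by
        rw [norm_smul, he, mul_one]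
        exact a.norm_coe_le_norm i
      map_add' a b := by ext i; simp [add_smul]
      map_smul' c a := by ext i; simp [mul_smul] }
    1 fun a => by
      rw [one_mul]
      exact (norm_le (norm_nonneg a)).2 fun i => by
        simpa [norm_smul, he] using a.norm_coe_le_norm i

@[simp]
theorem diagonalCLM_apply (a : ι →ᵇ ℝ) (i : ι) : diagonalCLM he a i = a i • e i := rfl

theorem norm_diagonalCLM_apply_apply (a : ι →ᵇ ℝ) (i : ι) : ‖diagonalCLM he a i‖ = ‖a i‖ := by
  rw [diagonalCLM_apply, norm_smul, he, mul_one]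

theorem norm_diagonalCLM_apply (a : ι →ᵇ ℝ) : ‖diagonalCLM he a‖ = ‖a‖ := by
  refine le_antisymm ((norm_le (norm_nonneg a)).2 fun i => ?_)
    ((norm_le (norm_nonneg _)).2 fun i => ?_)
  · exact (norm_diagonalCLM_apply_apply he a i).trans_le (a.norm_coe_le_norm i)
  · exact (norm_diagonalCLM_apply_apply he a i).symm.trans_le
      ((diagonalCLM he a).norm_coe_le_norm i)

theorem isometry_diagonalCLM : Isometry (diagonalCLM he) :=
  AddMonoidHomClass.isometry_of_norm _ (norm_diagonalCLM_apply he)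

theorem tendsto_diagonalCLM_apply_zero {a : ι →ᵇ ℝ} {l : Filter ι} (ha : Tendsto a l (nhds 0)) :
    Tendsto (fun i => diagonalCLM he a i) l (nhds 0) := by
  rw [tendsto_zero_iff_norm_tendsto_zero] at ha ⊢
  simpa only [norm_diagonalCLM_apply_apply] using ha

variable [Lattice E] [IsOrderedAddMonoid E] [PosSMulStrictMono ℝ E]

theorem diagonalCLM_apply_mem_disjointComplement
    (hdisj : Pairwise fun i j => e i ∈ disjointComplement (e j)) (a b : ι →ᵇ ℝ) {i j : ι}
    (hij : i ≠ j) : diagonalCLM he a i ∈ disjointComplement (diagonalCLM he b j) :=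
  smul_mem_disjointComplement_smul (hdisj hij) (a i) (b j)

variable [HasSolidNorm E]

theorem diagonalCLM_inf (he0 : ∀ i, 0 ≤ e i) (a b : ι →ᵇ ℝ) :
    diagonalCLM he (a ⊓ b) = diagonalCLM he a ⊓ diagonalCLM he b := by
  ext i
  exact (monotone_smul_right_of_nonneg (he0 i)).map_inf (a i) (b i)

end DiagonalOperator

theorem disjoint_normNull_completely_latticeable_c0_general
    {E : Type*} [NormedAddCommGroup E] [Lattice E] [HasSolidNorm E] [IsOrderedAddMonoid E]
    [NormedSpace ℝ E] [PosSMulStrictMono ℝ E] (h : ¬ FiniteDimensional ℝ E) :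
    ∃ T : (ℕ →ᵇ ℝ) →L[ℝ] (ℕ →ᵇ E),
      (∀ a, ‖T a‖ = ‖a‖) ∧
      (∀ a b : ℕ →ᵇ ℝ, T (a ⊓ b) = T a ⊓ T b) ∧
      (∀ a : ℕ →ᵇ ℝ, Tendsto (⇑a) atTop (nhds (0 : ℝ)) →
        Tendsto (fun j => T a j) atTop (nhds (0 : E))) ∧
      IsClosed (T '' {a : ℕ →ᵇ ℝ | Tendsto (⇑a) atTop (nhds (0 : ℝ))}) ∧
      (∀ a : ℕ →ᵇ ℝ, Tendsto (⇑a) atTop (nhds (0 : ℝ)) → a ≠ 0 →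
        (∀ i j, i ≠ j → |T a i| ⊓ |T a j| = 0) ∧
        Tendsto (fun j => T a j) atTop (nhds (0 : E))) := by
  obtain ⟨e, he0, he1, hdisj⟩ := exists_seq_nonneg_norm_eq_one_pairwise_disjoint h
  have hc₀ : IsClosed {a : ℕ →ᵇ ℝ | Tendsto (⇑a) atTop (nhds (0 : ℝ))} :=
    cocompact_eq_atTop (α := ℕ) ▸ isClosed_setOf_tendsto_cocompact_zero
  refine ⟨diagonalCLM he1, norm_diagonalCLM_apply he1, diagonalCLM_inf he1 he0,
    fun a ha => tendsto_diagonalCLM_apply_zero he1 ha,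
    (isometry_diagonalCLM he1).isClosedEmbedding.isClosedMap _ hc₀,
    fun a ha _ => ⟨fun i j hij => diagonalCLM_apply_mem_disjointComplement he1 hdisj a a hij,
      tendsto_diagonalCLM_apply_zero he1 ha⟩⟩

/-- For every infinite-dimensional Banach lattice `E`, the set of `E`-valued pairwise
disjoint norm-null sequences is completely latticeable in `c₀(E)`: there is a closed
infinite-dimensional sublattice of `c₀(E)` (realized inside `ℓ∞(E) = ℕ →ᵇ E`),
lattice isometric to `c₀` — namely the image of the `c₀`-part of `ℕ →ᵇ ℝ` under a
linear isometric Riesz homomorphism `T` — all of whose nonzero elements are pairwise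
disjoint norm-null sequences. -/
theorem disjoint_normNull_completely_latticeable_c0
    {E : Type*} [NormedAddCommGroup E] [Lattice E] [HasSolidNorm E] [IsOrderedAddMonoid E]
    [NormedSpace ℝ E] [PosSMulStrictMono ℝ E] [PosSMulReflectLT ℝ E]
    [CompleteSpace E] (h : ¬ FiniteDimensional ℝ E) :
    ∃ T : (ℕ →ᵇ ℝ) →L[ℝ] (ℕ →ᵇ E),
      (∀ a, ‖T a‖ = ‖a‖) ∧
      (∀ a b : ℕ →ᵇ ℝ, T (a ⊓ b) = T a ⊓ T b) ∧
      (∀ a : ℕ →ᵇ ℝ, Tendsto (⇑a) atTop (nhds (0 : ℝ)) →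
        Tendsto (fun j => T a j) atTop (nhds (0 : E))) ∧
      IsClosed (T '' {a : ℕ →ᵇ ℝ | Tendsto (⇑a) atTop (nhds (0 : ℝ))}) ∧
      (∀ a : ℕ →ᵇ ℝ, Tendsto (⇑a) atTop (nhds (0 : ℝ)) → a ≠ 0 →
        (∀ i j, i ≠ j → |T a i| ⊓ |T a j| = 0) ∧
        Tendsto (fun j => T a j) atTop (nhds (0 : E))) :=
  disjoint_normNull_completely_latticeable_c0_general h
end

section
/- Let E be a Banach lattice, x = (x_j) ∈ λ_π(E)⁺ with x_j ≠ 0 for all j, ℕ = ⋃_i ℕ_i a partition into pairwise disjoint infinite sets ℕ_i = {i_1 < i_2 < ...}, and define y_i ∈ λ_π(E) by placing x_j in coordinate i_j and 0 elsewhere. Then the map T : ℓ_1 → λ_π(E), T((a_i)) = Σ_i a_i y_i, is a well-defined injective bounded linear operator and a Riesz homomorphism, so its closure of range is a closed infinite-dimensional sublattice of λ_π(E). -/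
open Filter

/-- A Banach lattice of real sequences, with the coordinatewise order, described by a
membership predicate and a norm. -/
structure SeqBanachLattice where
  mem : (ℕ → ℝ) → Prop
  nrm : (ℕ → ℝ) → ℝ
  zero_mem : mem 0
  add_mem : ∀ a b, mem a → mem b → mem (a + b)
  smul_mem : ∀ (c : ℝ) a, mem a → mem (c • a)
  single_mem : ∀ j, mem (Pi.single j 1)
  nrm_nonneg : ∀ a, 0 ≤ nrm a
  nrm_eq_zero : ∀ a, mem a → (nrm a = 0 ↔ a = 0)
  nrm_add_le : ∀ a b, mem a → mem b → nrm (a + b) ≤ nrm a + nrm b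
  nrm_smul : ∀ (c : ℝ) a, mem a → nrm (c • a) = |c| * nrm a
  solid : ∀ a b, mem b → (∀ j, |a j| ≤ |b j|) → mem a ∧ nrm a ≤ nrm b
  complete : ∀ f : ℕ → (ℕ → ℝ), (∀ n, mem (f n)) →
    (∀ ε : ℝ, 0 < ε → ∃ N, ∀ n m, N ≤ n → N ≤ m → nrm (f n - f m) < ε) →
    ∃ g, mem g ∧ Tendsto (fun n => nrm (f n - g)) atTop (nhds 0)

/-- A KB-space of real sequences: a sequence Banach lattice in which every norm-bounded
increasing positive sequence is norm convergent. -/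
structure SeqKBLattice extends SeqBanachLattice where
  kb : ∀ f : ℕ → (ℕ → ℝ), (∀ n, mem (f n)) → (∀ n j, 0 ≤ f n j) →
    (∀ n m, n ≤ m → ∀ j, f n j ≤ f m j) → (∃ C, ∀ n, nrm (f n) ≤ C) →
    ∃ g, mem g ∧ Tendsto (fun n => nrm (f n - g)) atTop (nhds 0)

namespace SeqBanachLattice

variable (L : SeqBanachLattice)

/-- Membership in the Köthe dual `λ'` of `λ`. -/
def kmem (b : ℕ → ℝ) : Prop := ∀ a, L.mem a → Summable (fun j => |a j * b j|)

/-- The norm of the Köthe dual `λ'`: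
`‖b‖_{λ'} = sup_{a ∈ B_λ} |Σ_j a_j b_j|`. -/
noncomputable def knorm (b : ℕ → ℝ) : ℝ :=
  sSup {r | ∃ a, L.mem a ∧ L.nrm a ≤ 1 ∧ r = |∑' j, a j * b j|}

end SeqBanachLattice

section BanachLatticeValued

variable {E : Type*} [NormedAddCommGroup E] [Lattice E] [IsOrderedAddMonoid E] [HasSolidNorm E]
    [NormedSpace ℝ E] [CompleteSpace E]

/-- The value `|f|(x)` of the modulus of a functional `f ∈ E*` at `x ≥ 0`:
`|f|(x) = sup { f y : |y| ≤ x }`. -/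
noncomputable def absApply (f : E →L[ℝ] ℝ) (x : E) : ℝ :=
  sSup {r | ∃ y : E, |y| ≤ x ∧ r = f y}

/-- A sequence of functionals is positive if each term maps positive vectors to
nonnegative reals. -/
def PosFuncSeq (xs : ℕ → E →L[ℝ] ℝ) : Prop := ∀ j, ∀ y : E, 0 ≤ y → 0 ≤ xs j y

namespace SeqBanachLattice

variable (L : SeqBanachLattice)

/-- Membership in `λ'_ε(E*)`: `(|x_j*|(x))_j ∈ λ'` for every `x ≥ 0`. -/
def epsMem (xs : ℕ → E →L[ℝ] ℝ) : Prop :=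
  ∀ x : E, 0 ≤ x → L.kmem (fun j => absApply (xs j) x)

/-- The norm of `λ'_ε(E*)`: `‖(x_j*)‖_ε = sup_{x ∈ B_{E⁺}} ‖(|x_j*|(x))_j‖_{λ'}`. -/
noncomputable def epsNorm (xs : ℕ → E →L[ℝ] ℝ) : ℝ :=
  sSup {r | ∃ x : E, 0 ≤ x ∧ ‖x‖ ≤ 1 ∧ r = L.knorm (fun j => absApply (xs j) x)}

/-- Membership in `λ_π(E)`: `Σ_j x_j*(|x_j|) < ∞` for every positive `(x_j*) ∈ λ'_ε(E*)`. -/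
def piMem (x : ℕ → E) : Prop :=
  ∀ xs : ℕ → E →L[ℝ] ℝ, L.epsMem xs → PosFuncSeq xs → Summable (fun j => xs j |x j|)

/-- The norm of `λ_π(E)`: the supremum of `Σ_j x_j*(|x_j|)` over the positive part of
the unit ball of `λ'_ε(E*)`. -/
noncomputable def piNorm (x : ℕ → E) : ℝ :=
  sSup {r | ∃ xs : ℕ → E →L[ℝ] ℝ, L.epsMem xs ∧ PosFuncSeq xs ∧ L.epsNorm xs ≤ 1 ∧
    r = ∑' j, xs j |x j|}

/-- Membership in `λ'_w(E*)`: `(x_j*(x))_j ∈ λ'` for every `x ∈ E`. -/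
def wMem (xs : ℕ → E →L[ℝ] ℝ) : Prop := ∀ x : E, L.kmem (fun j => xs j x)

/-- The norm of `λ'_w(E*)`: `‖(x_j*)‖_w = sup_{x ∈ B_E} ‖(x_j*(x))_j‖_{λ'}`. -/
noncomputable def wNorm (xs : ℕ → E →L[ℝ] ℝ) : ℝ :=
  sSup {r | ∃ x : E, ‖x‖ ≤ 1 ∧ r = L.knorm (fun j => xs j x)}

/-- Membership in `λ_s(E)`: `Σ_j |x_j*(x_j)| < ∞` for every `(x_j*) ∈ λ'_w(E*)`. -/
def sMem (x : ℕ → E) : Prop :=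
  ∀ xs : ℕ → E →L[ℝ] ℝ, L.wMem xs → Summable (fun j => |xs j (x j)|)

/-- The norm of `λ_s(E)`. -/
noncomputable def sNorm (x : ℕ → E) : ℝ :=
  sSup {r | ∃ xs : ℕ → E →L[ℝ] ℝ, L.wMem xs ∧ L.wNorm xs ≤ 1 ∧
    r = |∑' j, xs j (x j)|}

end SeqBanachLattice

end BanachLatticeValued

open Classical in
/-- The closing-up `x^0` of a sequence `x`: its `j`-th coordinate is the `j`-th nonzero
coordinate of `x` if it exists, and `0` otherwise. -/
noncomputable def closeUp {α : Type*} [Zero α] (x : ℕ → α) : ℕ → α := fun j =>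
  if {i | x i ≠ 0}.Infinite ∨ j < Nat.card {i | x i ≠ 0} then
    x (Nat.nth (fun i => x i ≠ 0) j) else 0

/-- An invariant sequence lattice: a KB-space of sequences with normalized unit vectors
whose Köthe dual is invariant under closing-up (with the same norm) and under passing to
subsequences (with smaller norm). -/
structure InvariantSeqLattice extends SeqKBLattice where
  nrm_single : ∀ j, nrm (Pi.single j 1) = 1
  dual_closeUp_mem : ∀ b : ℕ → ℝ, toSeqBanachLattice.kmem b ↔
    toSeqBanachLattice.kmem (closeUp b)
  dual_closeUp_nrm : ∀ b : ℕ → ℝ, toSeqBanachLattice.kmem b →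
    toSeqBanachLattice.knorm b = toSeqBanachLattice.knorm (closeUp b)
  dual_subseq : ∀ (b : ℕ → ℝ) (k : ℕ → ℕ), toSeqBanachLattice.kmem b → StrictMono k →
    toSeqBanachLattice.kmem (b ∘ k) ∧
      toSeqBanachLattice.knorm (b ∘ k) ≤ toSeqBanachLattice.knorm b

/-!
Coordinatewise, `T a (N i j) = a i • x j`, because the ranges of the `N i` partition `ℕ`. Linearity,
injectivity (test at `N i 0`, where `x 0 ≠ 0`) and `T (a ⊓ b) = T a ⊓ T b` (as `t ↦ t • x j` is
monotone for `x j ≥ 0`) are therefore identities between coordinates. For a positive `(x*_m)` in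
`λ'_ε(E*)` the sum `Σ_m x*_m |T a m|` regroups as `Σ_i |a i| Σ_j x*_{N i j} |x j|`; as `λ'` is
invariant under subsequences, each `(x*_{N i j})_j` has `ε`-norm at most that of `(x*_m)`, so every
inner sum is at most `‖x‖_π` times it.

All the norms involved are suprema, and `sSup` of an unbounded set of reals is `0`, so each of
these sets has to be shown bounded. This is a gliding hump: if `φ (u k) > 4 ^ k` on a unit ball,
the element `Σ 2⁻ᵏ u k` (built by the KB property in `λ`, by completeness in `E` and in `E*`)
dominates every `2⁻ᵏ u k`, so `φ` of it exceeds `2 ^ k` for every `k`.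
-/

open Set Function

lemma exists_bound_of_le_two_pow_mul {α : Type*} {s : Set α} {φ : α → ℝ}
    (h : ∀ u : ℕ → α, (∀ k, u k ∈ s) → ∃ R, ∀ k, φ (u k) ≤ 2 ^ k * R) :
    ∃ C, ∀ a ∈ s, φ a ≤ C := by
  by_contra! hunb
  choose u hus hlt using fun k : ℕ => hunb ((4 : ℝ) ^ k)
  obtain ⟨R, hR⟩ := h u hus
  obtain ⟨k, hk⟩ := pow_unbounded_of_one_lt R one_lt_two
  have h4 : (4 : ℝ) ^ k = 2 ^ k * 2 ^ k := by rw [← mul_pow]; norm_num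
  have : (2 : ℝ) ^ k * 2 ^ k < 2 ^ k * R := h4 ▸ (hlt k).trans_le (hR k)
  exact hk.not_gt (lt_of_mul_lt_mul_left this (by positivity))

lemma abs_tsum_le_tsum_abs {ι : Type*} {f : ι → ℝ} (hf : Summable fun i => |f i|) :
    |∑' i, f i| ≤ ∑' i, |f i| := by
  simpa only [Real.norm_eq_abs] using
    norm_tsum_le_tsum_norm (f := f) (by simpa only [Real.norm_eq_abs] using hf)

lemma bijective_sigma_of_partition {ι α β : Type*} {N : ι → α → β} (hinj : ∀ i, Injective (N i))
    (hdisj : ∀ i i', i ≠ i' → Disjoint (range (N i)) (range (N i')))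
    (hcover : (⋃ i, range (N i)) = univ) : Bijective fun p : Σ _ : ι, α => N p.1 p.2 := by
  refine ⟨?_, fun m => ?_⟩
  · rintro ⟨i, j⟩ ⟨i', j'⟩ h
    obtain rfl : i = i' := by
      by_contra hii
      exact disjoint_left.mp (hdisj i i' hii) ⟨j, rfl⟩ ⟨j', h.symm⟩
    exact congrArg (Sigma.mk i) (hinj i h)
  · obtain ⟨i, j, rfl⟩ := mem_iUnion.mp (hcover ▸ mem_univ m)
    exact ⟨⟨i, j⟩, rfl⟩

lemma hasSum_of_bijective_sigma {ι α : Type*} {N : ι → α → ℕ}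
    (hN : Bijective fun p : Σ _ : ι, α => N p.1 p.2) {f : ℕ → ℝ} (hf : ∀ m, 0 ≤ f m)
    (hrow : ∀ i, Summable fun j => f (N i j)) (hsum : Summable fun i => ∑' j, f (N i j)) :
    HasSum f (∑' i, ∑' j, f (N i j)) := by
  set e := Equiv.ofBijective _ hN
  have h : Summable (f ∘ e) := (summable_sigma_of_nonneg fun p => hf _).mpr ⟨hrow, hsum⟩
  rw [← e.hasSum_iff]
  convert h.hasSum using 1
  exact h.tsum_sigma.symm

lemma tsum_smul_apply_of_disjoint {ι α β M : Type*} [AddCommMonoid M] [TopologicalSpace M]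
    [Module ℝ M] {N : ι → α → β} (hdisj : ∀ i i', i ≠ i' → Disjoint (range (N i)) (range (N i')))
    {x : α → M} {y : ι → β → M} (hy : ∀ i j, y i (N i j) = x j)
    (hy0 : ∀ i m, m ∉ range (N i) → y i m = 0) (a : ι → ℝ) (i : ι) (j : α) :
    ∑' i', a i' • y i' (N i j) = a i • x j := by
  rw [tsum_eq_single i fun i' hi' => ?_, hy]
  rw [hy0 i' _ (disjoint_right.mp (hdisj i' i hi') ⟨j, rfl⟩), smul_zero]

lemma abs_smul_of_nonneg {M : Type*} [AddCommGroup M] [Lattice M] [IsOrderedAddMonoid M]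
    [Module ℝ M] [PosSMulMono ℝ M] (c : ℝ) {v : M} (hv : 0 ≤ v) : |c • v| = |c| • v := by
  rcases le_total 0 c with hc | hc
  · rw [abs_of_nonneg (smul_nonneg hc hv), abs_of_nonneg hc]
  · rw [abs_of_nonpos (smul_nonpos_of_nonpos_of_nonneg hc hv), abs_of_nonpos hc, neg_smul]

lemma inf_smul_of_nonneg {M : Type*} [Lattice M] [Zero M] [SMul ℝ M] [SMulPosMono ℝ M]
    (s t : ℝ) {v : M} (hv : 0 ≤ v) : (s ⊓ t) • v = s • v ⊓ t • v := by
  rcases le_total s t with h | h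
  · rw [inf_eq_left.mpr h, inf_eq_left.mpr (smul_le_smul_of_nonneg_right h hv)]
  · rw [inf_eq_right.mpr h, inf_eq_right.mpr (smul_le_smul_of_nonneg_right h hv)]

namespace SeqBanachLattice

variable (L : SeqBanachLattice)

lemma nrm_zero : L.nrm 0 = 0 := (L.nrm_eq_zero 0 L.zero_mem).mpr rfl

lemma sub_mem {a b : ℕ → ℝ} (ha : L.mem a) (hb : L.mem b) : L.mem (a - b) := by
  simpa [sub_eq_add_neg] using L.add_mem a _ ha (L.smul_mem (-1) b hb)

lemma mem_sum_and_nrm_sum_le {ι : Type*} (s : Finset ι) (f : ι → ℕ → ℝ)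
    (hf : ∀ i ∈ s, L.mem (f i)) :
    L.mem (∑ i ∈ s, f i) ∧ L.nrm (∑ i ∈ s, f i) ≤ ∑ i ∈ s, L.nrm (f i) := by
  classical
  induction s using Finset.induction_on with
  | empty => simpa using ⟨L.zero_mem, L.nrm_zero.le⟩
  | @insert i s hi ih =>
    obtain ⟨hmem, hnrm⟩ := ih fun k hk => hf k (Finset.mem_insert_of_mem hk)
    have hfi := hf i (Finset.mem_insert_self i s)
    rw [Finset.sum_insert hi, Finset.sum_insert hi]
    exact ⟨L.add_mem _ _ hfi hmem, (L.nrm_add_le _ _ hfi hmem).trans (by linarith)⟩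

lemma abs_apply_le_nrm (hs : ∀ j, L.nrm (Pi.single j 1) = 1) {a : ℕ → ℝ} (ha : L.mem a)
    (j : ℕ) : |a j| ≤ L.nrm a := by
  have h := (L.solid (a j • Pi.single j 1) a ha fun m => ?_).2
  · rwa [L.nrm_smul _ _ (L.single_mem j), hs, mul_one] at h
  · by_cases hm : m = j
    · subst hm; simp
    · simp [hm]

lemma knorm_nonneg (b : ℕ → ℝ) : 0 ≤ L.knorm b :=
  Real.sSup_nonneg <| by rintro r ⟨a, -, -, rfl⟩; exact abs_nonneg _

lemma summable_abs_mul_of_kmem {b a : ℕ → ℝ} (hb : L.kmem b) (hb0 : ∀ j, 0 ≤ b j)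
    (ha : L.mem a) : Summable fun j => |a j| * b j :=
  (hb a ha).congr fun j => by rw [abs_mul, abs_of_nonneg (hb0 j)]

end SeqBanachLattice

namespace SeqKBLattice

variable (L : SeqKBLattice) (hs : ∀ j, L.nrm (Pi.single j 1) = 1)
include hs

lemma exists_mem_two_pow_mul_ge (a : ℕ → ℕ → ℝ)
    (ha : ∀ k, L.mem (a k)) (ha1 : ∀ k, L.nrm (a k) ≤ 1) :
    ∃ g, L.mem g ∧ ∀ k j, |a k j| ≤ 2 ^ k * g j := by
  set F : ℕ → ℕ → ℝ := fun n => ∑ k ∈ Finset.range n, (2⁻¹ : ℝ) ^ k • fun j => |a k j|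
  have hFj : ∀ n j, F n j = ∑ k ∈ Finset.range n, (2⁻¹ : ℝ) ^ k * |a k j| := fun n j => by
    simp [F, Finset.sum_apply]
  have hterm : ∀ k, L.mem ((2⁻¹ : ℝ) ^ k • fun j => |a k j|) ∧
      L.nrm ((2⁻¹ : ℝ) ^ k • fun j => |a k j|) ≤ 2⁻¹ ^ k := fun k => by
    obtain ⟨habs, habs1⟩ := L.solid (fun j => |a k j|) (a k) (ha k) fun j => (abs_abs _).le
    refine ⟨L.smul_mem _ _ habs, ?_⟩
    rw [L.nrm_smul _ _ habs, abs_of_pos (by positivity)]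
    exact mul_le_of_le_one_right (by positivity) (habs1.trans (ha1 k))
  have hF : ∀ n, L.mem (F n) ∧ L.nrm (F n) ≤ 2 := fun n => by
    obtain ⟨hmem, hnrm⟩ := L.mem_sum_and_nrm_sum_le (Finset.range n) _ fun k _ => (hterm k).1
    refine ⟨hmem, hnrm.trans ((Finset.sum_le_sum fun k _ => (hterm k).2).trans ?_)⟩
    simpa using sum_geometric_two_le n
  have hmono : ∀ j, Monotone fun n => F n j := fun j => monotone_nat_of_le_succ fun n => by
    simp only [hFj, Finset.sum_range_succ]
    exact le_add_of_nonneg_right (by positivity)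
  obtain ⟨g, hg, hlim⟩ := L.kb F (fun n => (hF n).1) (fun n j => by rw [hFj]; positivity)
    (fun n m hnm j => hmono j hnm) ⟨2, fun n => (hF n).2⟩
  refine ⟨g, hg, fun k j => ?_⟩
  have hFg : Tendsto (fun n => F n j) atTop (nhds (g j)) :=
    tendsto_iff_norm_sub_tendsto_zero.mpr <| squeeze_zero (fun n => norm_nonneg _)
      (fun n => L.abs_apply_le_nrm hs (L.sub_mem (hF n).1 hg) j) hlim
  have hk : (2⁻¹ : ℝ) ^ k * |a k j| ≤ g j := by
    refine le_trans ?_ ((hmono j).ge_of_tendsto hFg (k + 1))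
    rw [hFj, Finset.sum_range_succ]
    exact le_add_of_nonneg_left (by positivity)
  calc |a k j| = 2 ^ k * ((2⁻¹ : ℝ) ^ k * |a k j|) := by
        rw [← mul_assoc, ← mul_pow]; norm_num
    _ ≤ 2 ^ k * g j := by gcongr

lemma exists_tsum_abs_mul_le {b : ℕ → ℝ} (hb : L.kmem b) (hb0 : ∀ j, 0 ≤ b j) :
    ∃ C, ∀ a ∈ {a | L.mem a ∧ L.nrm a ≤ 1}, ∑' j, |a j| * b j ≤ C := by
  refine exists_bound_of_le_two_pow_mul fun a ha => ?_
  obtain ⟨g, hg, hag⟩ :=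
    L.exists_mem_two_pow_mul_ge hs a (fun k => (ha k).1) (fun k => (ha k).2)
  refine ⟨∑' j, |g j * b j|, fun k => ?_⟩
  rw [← (hb g hg).tsum_mul_left]
  refine Summable.tsum_le_tsum (fun j => ?_) (L.summable_abs_mul_of_kmem hb hb0 (ha k).1)
    ((hb g hg).mul_left _)
  calc |a k j| * b j ≤ 2 ^ k * g j * b j := mul_le_mul_of_nonneg_right (hag k j) (hb0 j)
    _ ≤ 2 ^ k * |g j * b j| := by rw [mul_assoc]; gcongr; exact le_abs_self _

lemma knorm_set_bddAbove {b : ℕ → ℝ} (hb : L.kmem b) (hb0 : ∀ j, 0 ≤ b j) :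
    BddAbove {r | ∃ a, L.mem a ∧ L.nrm a ≤ 1 ∧ r = |∑' j, a j * b j|} := by
  obtain ⟨C, hC⟩ := L.exists_tsum_abs_mul_le hs hb hb0
  refine ⟨C, ?_⟩
  rintro r ⟨a, ha, ha1, rfl⟩
  refine le_trans ?_ (hC a ⟨ha, ha1⟩)
  simpa only [abs_mul, abs_of_nonneg (hb0 _)] using abs_tsum_le_tsum_abs (hb a ha)

lemma tsum_abs_mul_le_knorm_mul {b : ℕ → ℝ} (hb : L.kmem b) (hb0 : ∀ j, 0 ≤ b j)
    {a : ℕ → ℝ} (ha : L.mem a) : ∑' j, |a j| * b j ≤ L.knorm b * L.nrm a := by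
  rcases (L.nrm_nonneg a).eq_or_lt with h0 | hpos
  · obtain rfl : a = 0 := (L.nrm_eq_zero a ha).mp h0.symm
    simp [L.nrm_zero]
  set c := L.nrm a
  obtain ⟨habs, habs1⟩ := L.solid (fun j => |a j|) a ha fun j => (abs_abs _).le
  have hball : L.mem (c⁻¹ • fun j => |a j|) ∧ L.nrm (c⁻¹ • fun j => |a j|) ≤ 1 := by
    refine ⟨L.smul_mem _ _ habs, ?_⟩
    rw [L.nrm_smul _ _ habs, abs_of_pos (inv_pos.mpr hpos), inv_mul_le_one₀ hpos]
    exact habs1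
  have hval : ∑' j, (c⁻¹ • fun j => |a j|) j * b j = c⁻¹ * ∑' j, |a j| * b j := by
    rw [← tsum_mul_left]
    exact tsum_congr fun j => by simp [mul_assoc]
  have hle : c⁻¹ * ∑' j, |a j| * b j ≤ L.knorm b := by
    refine le_csSup (L.knorm_set_bddAbove hs hb hb0) ⟨_, hball.1, hball.2, ?_⟩
    rw [hval, abs_of_nonneg (mul_nonneg (inv_pos.mpr hpos).le
      (tsum_nonneg fun j => mul_nonneg (abs_nonneg (a j)) (hb0 j)))]
  rwa [inv_mul_le_iff₀ hpos, mul_comm] at hle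

lemma kmem_and_knorm_le_of_abs_le {b c : ℕ → ℝ} (hc : L.kmem c) (hc0 : ∀ j, 0 ≤ c j) {t : ℝ}
    (ht : 0 ≤ t) (hbc : ∀ j, |b j| ≤ t * c j) : L.kmem b ∧ L.knorm b ≤ t * L.knorm c := by
  have hdom : ∀ a : ℕ → ℝ, ∀ j, |a j * b j| ≤ t * (|a j| * c j) := fun a j => by
    rw [abs_mul, mul_left_comm]; gcongr; exact hbc j
  have hkmem : L.kmem b := fun a ha =>
    ((L.summable_abs_mul_of_kmem hc hc0 ha).mul_left t).of_nonneg_of_le (fun _ => abs_nonneg _)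
      (hdom a)
  refine ⟨hkmem, Real.sSup_le ?_ (mul_nonneg ht (L.knorm_nonneg c))⟩
  rintro r ⟨a, ha, ha1, rfl⟩
  calc |∑' j, a j * b j| ≤ ∑' j, |a j * b j| := abs_tsum_le_tsum_abs (hkmem a ha)
    _ ≤ ∑' j, t * (|a j| * c j) :=
        (hkmem a ha).tsum_le_tsum (hdom a) ((L.summable_abs_mul_of_kmem hc hc0 ha).mul_left t)
    _ = t * ∑' j, |a j| * c j := tsum_mul_left
    _ ≤ t * (L.knorm c * L.nrm a) := by gcongr; exact L.tsum_abs_mul_le_knorm_mul hs hc hc0 ha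
    _ ≤ t * L.knorm c := by
        gcongr; exact mul_le_of_le_one_right (L.knorm_nonneg c) ha1

end SeqKBLattice

section BanachLatticeValued

variable {E : Type*} [NormedAddCommGroup E] [Lattice E] [NormedSpace ℝ E]

lemma absApply_of_nonneg [IsOrderedAddMonoid E] {f : E →L[ℝ] ℝ} (hf : ∀ y, 0 ≤ y → 0 ≤ f y)
    {v : E} (hv : 0 ≤ v) : absApply f v = f v := by
  have hub : ∀ r ∈ {r | ∃ y : E, |y| ≤ v ∧ r = f y}, r ≤ f v := by
    rintro r ⟨y, hy, rfl⟩
    have h := hf _ (sub_nonneg.mpr ((le_abs_self y).trans hy))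
    rwa [map_sub, sub_nonneg] at h
  exact le_antisymm (Real.sSup_le hub (hf v hv))
    (le_csSup ⟨f v, hub⟩ ⟨v, (abs_of_nonneg hv).le, rfl⟩)

lemma abs_apply_le_apply_abs [IsOrderedAddMonoid E] {f : E →L[ℝ] ℝ}
    (hf : ∀ y, 0 ≤ y → 0 ≤ f y) (y : E) : |f y| ≤ f |y| := by
  have h₁ := hf _ (neg_le_iff_add_nonneg'.mp (neg_le_abs y))
  have h₂ := hf _ (sub_nonneg.mpr (le_abs_self y))
  rw [map_add] at h₁
  rw [map_sub] at h₂
  exact abs_le.mpr ⟨by linarith, by linarith⟩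

lemma exists_nonneg_two_pow_smul_ge [IsOrderedAddMonoid E] [HasSolidNorm E] [CompleteSpace E]
    [PosSMulMono ℝ E] (v : ℕ → E) (hv0 : ∀ k, 0 ≤ v k) (hv1 : ∀ k, ‖v k‖ ≤ 1) :
    ∃ w, 0 ≤ w ∧ ∀ k, v k ≤ (2 : ℝ) ^ k • w := by
  have hterm : ∀ k, 0 ≤ (2⁻¹ : ℝ) ^ k • v k := fun k => smul_nonneg (by positivity) (hv0 k)
  have hsum : Summable fun k => (2⁻¹ : ℝ) ^ k • v k :=
    (summable_geometric_of_lt_one (by norm_num : (0 : ℝ) ≤ 2⁻¹) (by norm_num)).of_norm_bounded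
      fun k => by
        rw [norm_smul, Real.norm_of_nonneg (by positivity)]
        exact mul_le_of_le_one_right (by positivity) (hv1 k)
  refine ⟨∑' k, (2⁻¹ : ℝ) ^ k • v k, tsum_nonneg hterm, fun k => ?_⟩
  calc v k = (2 : ℝ) ^ k • (2⁻¹ : ℝ) ^ k • v k := by rw [smul_smul, ← mul_pow]; norm_num
    _ ≤ _ := smul_le_smul_of_nonneg_left (hsum.le_tsum k fun j _ => hterm j) (by positivity)

namespace SeqBanachLattice

variable (L : SeqBanachLattice) {xs : ℕ → E →L[ℝ] ℝ}

lemma kmem_apply [IsOrderedAddMonoid E] (he : L.epsMem xs) (hp : PosFuncSeq xs) {v : E}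
    (hv : 0 ≤ v) : L.kmem fun j => xs j v := by
  simpa only [absApply_of_nonneg (hp _) hv] using he v hv

lemma epsNorm_nonneg (xs : ℕ → E →L[ℝ] ℝ) : 0 ≤ L.epsNorm xs :=
  Real.sSup_nonneg <| by rintro r ⟨v, -, -, rfl⟩; exact L.knorm_nonneg _

lemma piNorm_nonneg [IsOrderedAddMonoid E] (x : ℕ → E) : 0 ≤ L.piNorm x :=
  Real.sSup_nonneg <| by
    rintro r ⟨xs, -, hp, -, rfl⟩; exact tsum_nonneg fun j => hp j _ (abs_nonneg _)

end SeqBanachLattice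

namespace SeqKBLattice

variable [IsOrderedAddMonoid E] [HasSolidNorm E] [CompleteSpace E] [PosSMulMono ℝ E]
  (L : SeqKBLattice) (hs : ∀ j, L.nrm (Pi.single j 1) = 1) {xs : ℕ → E →L[ℝ] ℝ}
include hs

lemma epsNorm_set_bddAbove (he : L.epsMem xs) (hp : PosFuncSeq xs) :
    BddAbove {r | ∃ v : E, 0 ≤ v ∧ ‖v‖ ≤ 1 ∧ r = L.knorm fun j => absApply (xs j) v} := by
  obtain ⟨C, hC⟩ := exists_bound_of_le_two_pow_mul (s := {v : E | 0 ≤ v ∧ ‖v‖ ≤ 1})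
    (φ := fun v => L.knorm fun j => xs j v) fun v hv => by
      obtain ⟨w, hw0, hvw⟩ :=
        exists_nonneg_two_pow_smul_ge v (fun k => (hv k).1) (fun k => (hv k).2)
      refine ⟨L.knorm fun j => xs j w, fun k => (L.kmem_and_knorm_le_of_abs_le hs
        (L.kmem_apply he hp hw0) (fun j => hp j w hw0) (by positivity) fun j => ?_).2⟩
      have h := hp j _ (sub_nonneg.mpr (hvw k))
      rwa [map_sub, map_smul, smul_eq_mul, sub_nonneg, ← abs_of_nonneg (hp j _ (hv k).1)] at h
  refine ⟨C, ?_⟩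
  rintro r ⟨v, hv0, hv1, rfl⟩
  simpa only [absApply_of_nonneg (hp _) hv0] using hC v ⟨hv0, hv1⟩

section

variable (he : L.epsMem xs) (hp : PosFuncSeq xs)
include he hp

lemma knorm_apply_le_epsNorm {v : E} (hv0 : 0 ≤ v) (hv1 : ‖v‖ ≤ 1) :
    L.knorm (fun j => xs j v) ≤ L.epsNorm xs := by
  have h := le_csSup (L.epsNorm_set_bddAbove hs he hp) ⟨v, hv0, hv1, rfl⟩
  simp only [absApply_of_nonneg (hp _) hv0] at h
  exact h

lemma knorm_apply_le_epsNorm_mul_norm {v : E} (hv0 : 0 ≤ v) :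
    L.knorm (fun j => xs j v) ≤ L.epsNorm xs * ‖v‖ := by
  set u := ‖v‖⁻¹ • v
  have hu0 : 0 ≤ u := smul_nonneg (by positivity) hv0
  have hu1 : ‖u‖ ≤ 1 := by rw [norm_smul, norm_inv, norm_norm]; exact inv_mul_le_one
  have hvu : ∀ j, xs j v = ‖v‖ * xs j u := fun j => by
    rcases eq_or_ne v 0 with rfl | hv
    · simp
    · rw [← smul_eq_mul, ← map_smul, smul_inv_smul₀ (norm_ne_zero_iff.mpr hv)]
  calc L.knorm (fun j => xs j v) ≤ ‖v‖ * L.knorm fun j => xs j u :=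
        (L.kmem_and_knorm_le_of_abs_le hs (L.kmem_apply he hp hu0) (fun j => hp j u hu0)
          (norm_nonneg v) fun j => by rw [hvu, abs_mul, abs_norm, abs_of_nonneg (hp j u hu0)]).2
    _ ≤ ‖v‖ * L.epsNorm xs := by gcongr; exact L.knorm_apply_le_epsNorm hs he hp hu0 hu1
    _ = L.epsNorm xs * ‖v‖ := mul_comm _ _

lemma tsum_abs_mul_apply_le {a : ℕ → ℝ} (ha : L.mem a) {v : E} (hv0 : 0 ≤ v) :
    ∑' j, |a j| * xs j v ≤ L.epsNorm xs * ‖v‖ * L.nrm a :=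
  (L.tsum_abs_mul_le_knorm_mul hs (L.kmem_apply he hp hv0) (fun j => hp j v hv0) ha).trans
    (mul_le_mul_of_nonneg_right (L.knorm_apply_le_epsNorm_mul_norm hs he hp hv0) (L.nrm_nonneg a))

lemma apply_le_epsNorm_mul_norm {v : E} (hv0 : 0 ≤ v) (j : ℕ) :
    xs j v ≤ L.epsNorm xs * ‖v‖ := by
  have h := le_csSup (L.knorm_set_bddAbove hs (L.kmem_apply he hp hv0) fun m => hp m v hv0)
    ⟨Pi.single j 1, L.single_mem j, (hs j).le, rfl⟩
  rw [tsum_eq_single j fun m hm => by simp [Pi.single_eq_of_ne hm], Pi.single_eq_same, one_mul,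
    abs_of_nonneg (hp j v hv0)] at h
  exact h.trans (L.knorm_apply_le_epsNorm_mul_norm hs he hp hv0)

lemma norm_le_epsNorm (j : ℕ) : ‖xs j‖ ≤ L.epsNorm xs :=
  (xs j).opNorm_le_bound (L.epsNorm_nonneg xs) fun y => by
    rw [Real.norm_eq_abs, ← norm_abs_eq_norm y]
    exact (abs_apply_le_apply_abs (hp j) y).trans
      (L.apply_le_epsNorm_mul_norm hs he hp (abs_nonneg y) j)

end

lemma exists_posFuncSeq_two_pow_mul_ge (u : ℕ → ℕ → E →L[ℝ] ℝ)
    (hu : ∀ k, L.epsMem (u k) ∧ PosFuncSeq (u k) ∧ L.epsNorm (u k) ≤ 1) :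
    ∃ zs, L.epsMem zs ∧ PosFuncSeq zs ∧ ∀ k j y, 0 ≤ y → u k j y ≤ 2 ^ k * zs j y := by
  have hgeo : HasSum (fun k : ℕ => (2⁻¹ : ℝ) ^ k) 2 := by simpa using hasSum_geometric_two
  have hsum : ∀ j, Summable fun k => (2⁻¹ : ℝ) ^ k • u k j := fun j =>
    hgeo.summable.of_norm_bounded fun k => by
      rw [norm_smul, Real.norm_of_nonneg (by positivity)]
      exact mul_le_of_le_one_right (by positivity)
        ((L.norm_le_epsNorm hs (hu k).1 (hu k).2.1 j).trans (hu k).2.2)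
  set zs : ℕ → E →L[ℝ] ℝ := fun j => ∑' k, (2⁻¹ : ℝ) ^ k • u k j
  have hzs : ∀ j y, HasSum (fun k => (2⁻¹ : ℝ) ^ k * u k j y) (zs j y) := fun j y => by
    simpa [zs] using (hsum j).hasSum.mapL (ContinuousLinearMap.apply ℝ ℝ y)
  have hpos : PosFuncSeq zs := fun j y hy =>
    (hzs j y).nonneg fun k => mul_nonneg (by positivity) ((hu k).2.1 j y hy)
  refine ⟨zs, fun v hv a ha => ?_, hpos, fun k j y hy => ?_⟩
  · simp only [absApply_of_nonneg (hpos _) hv, abs_mul, abs_of_nonneg (hpos _ v hv)]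
    refine summable_of_sum_le (c := 2 * (‖v‖ * L.nrm a)) (fun j => by positivity [hpos j v hv])
      fun s => ?_
    have hrow : ∀ k, ∑ j ∈ s, |a j| * u k j v ≤ ‖v‖ * L.nrm a := fun k => by
      obtain ⟨he, hp, hn⟩ := hu k
      refine (Summable.sum_le_tsum s (fun j _ => mul_nonneg (abs_nonneg _) (hp j v hv))
        (L.summable_abs_mul_of_kmem (L.kmem_apply he hp hv) (fun j => hp j v hv) ha)).trans
        ((L.tsum_abs_mul_apply_le hs he hp ha hv).trans ?_)
      rw [mul_assoc]
      exact mul_le_of_le_one_left (by positivity [L.nrm_nonneg a]) hn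
    refine hasSum_le (fun k => ?_) (hasSum_sum fun j _ => (hzs j v).mul_left |a j|)
      (hgeo.mul_right (‖v‖ * L.nrm a))
    calc ∑ j ∈ s, |a j| * ((2⁻¹ : ℝ) ^ k * u k j v) = 2⁻¹ ^ k * ∑ j ∈ s, |a j| * u k j v := by
          rw [Finset.mul_sum]; exact Finset.sum_congr rfl fun j _ => by ring
      _ ≤ 2⁻¹ ^ k * (‖v‖ * L.nrm a) := by gcongr; exact hrow k
  · calc u k j y = 2 ^ k * ((2⁻¹ : ℝ) ^ k * u k j y) := by rw [← mul_assoc, ← mul_pow]; norm_num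
      _ ≤ 2 ^ k * zs j y := by
        gcongr
        exact le_hasSum (hzs j y) k fun i _ => mul_nonneg (by positivity) ((hu i).2.1 j y hy)

lemma piNorm_set_bddAbove {x : ℕ → E} (hx : L.piMem x) :
    BddAbove {r | ∃ xs : ℕ → E →L[ℝ] ℝ, L.epsMem xs ∧ PosFuncSeq xs ∧ L.epsNorm xs ≤ 1 ∧
      r = ∑' j, xs j |x j|} := by
  obtain ⟨C, hC⟩ := exists_bound_of_le_two_pow_mul
    (s := {xs | L.epsMem xs ∧ PosFuncSeq xs ∧ L.epsNorm xs ≤ 1})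
    (φ := fun xs : ℕ → E →L[ℝ] ℝ => ∑' j, xs j |x j|) fun u hu => by
      obtain ⟨zs, hze, hzp, hdom⟩ := L.exists_posFuncSeq_two_pow_mul_ge hs u hu
      refine ⟨∑' j, zs j |x j|, fun k => ?_⟩
      rw [← tsum_mul_left]
      exact (hx _ (hu k).1 (hu k).2.1).tsum_le_tsum (fun j => hdom k j _ (abs_nonneg _))
        ((hx zs hze hzp).mul_left _)
  refine ⟨C, ?_⟩
  rintro r ⟨xs, he, hp, hn, rfl⟩
  exact hC xs ⟨he, hp, hn⟩

lemma tsum_apply_abs_le_mul_piNorm {x : ℕ → E} (hx : L.piMem x) (he : L.epsMem xs)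
    (hp : PosFuncSeq xs) {t : ℝ} (ht : 0 < t) (hn : L.epsNorm xs ≤ t) :
    ∑' j, xs j |x j| ≤ t * L.piNorm x := by
  set ys : ℕ → E →L[ℝ] ℝ := fun j => t⁻¹ • xs j
  have hyp : PosFuncSeq ys := fun j y hy => by
    simpa [ys] using mul_nonneg (inv_nonneg.mpr ht.le) (hp j y hy)
  have hyk : ∀ v, 0 ≤ v → L.kmem (fun j => absApply (ys j) v) ∧
      L.knorm (fun j => absApply (ys j) v) ≤ t⁻¹ * L.knorm fun j => xs j v := fun v hv =>
    L.kmem_and_knorm_le_of_abs_le hs (L.kmem_apply he hp hv) (fun j => hp j v hv)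
      (inv_nonneg.mpr ht.le) fun j => by
        simp [absApply_of_nonneg (hyp j) hv, ys, abs_mul, abs_of_nonneg (hp j v hv), abs_of_pos ht]
  have hyn : L.epsNorm ys ≤ 1 := Real.sSup_le (fun _ ⟨v, hv, hv1, hr⟩ => hr ▸ by
    calc _ ≤ t⁻¹ * L.knorm fun j => xs j v := (hyk v hv).2
      _ ≤ t⁻¹ * t := by gcongr; exact (L.knorm_apply_le_epsNorm hs he hp hv hv1).trans hn
      _ = 1 := inv_mul_cancel₀ ht.ne') zero_le_one
  have hle : ∑' j, ys j |x j| ≤ L.piNorm x :=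
    le_csSup (L.piNorm_set_bddAbove hs hx) ⟨ys, fun v hv => (hyk v hv).1, hyp, hyn, rfl⟩
  have hys : ∑' j, ys j |x j| = t⁻¹ * ∑' j, xs j |x j| := by simp [ys, tsum_mul_left]
  rwa [hys, inv_mul_le_iff₀ ht] at hle

end SeqKBLattice

end BanachLatticeValued

namespace InvariantSeqLattice

variable {E : Type*} [NormedAddCommGroup E] [Lattice E] [NormedSpace ℝ E]
  (L : InvariantSeqLattice) {xs : ℕ → E →L[ℝ] ℝ} {k : ℕ → ℕ}

lemma epsMem_comp (he : L.epsMem xs) (hk : StrictMono k) : L.epsMem fun j => xs (k j) :=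
  fun v hv => (L.dual_subseq _ k (he v hv) hk).1

variable [IsOrderedAddMonoid E] [HasSolidNorm E] [CompleteSpace E] [PosSMulMono ℝ E]

lemma epsNorm_comp_le (he : L.epsMem xs) (hp : PosFuncSeq xs) (hk : StrictMono k) :
    L.epsNorm (fun j => xs (k j)) ≤ L.epsNorm xs :=
  Real.sSup_le (fun _ ⟨v, hv, hv1, hr⟩ => hr ▸ (L.dual_subseq _ k (he v hv) hk).2.trans
    (le_csSup (L.epsNorm_set_bddAbove L.nrm_single he hp) ⟨v, hv, hv1, rfl⟩))
    (L.epsNorm_nonneg xs)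

section Placement

variable {x : ℕ → E} (hx : L.piMem x) (hx0 : ∀ j, 0 ≤ x j) {N : ℕ → ℕ → ℕ}
  (hmono : ∀ i, StrictMono (N i)) (hN : Bijective fun p : Σ _ : ℕ, ℕ => N p.1 p.2)
  {a : ℕ → ℝ} (ha : Summable fun i => |a i|) {u : ℕ → E} (hu : ∀ i j, u (N i j) = a i • x j)
include hx hx0 hmono hN ha hu

lemma hasSum_apply_abs_of_placement (he : L.epsMem xs) (hp : PosFuncSeq xs) :
    HasSum (fun m => xs m |u m|) (∑' i, |a i| * ∑' j, xs (N i j) |x j|) := by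
  have hsub : ∀ i, L.epsMem (fun j => xs (N i j)) := fun i => L.epsMem_comp he (hmono i)
  have hS : ∀ i, ∑' j, xs (N i j) |x j| ≤ (L.epsNorm xs + 1) * L.piNorm x := fun i =>
    L.tsum_apply_abs_le_mul_piNorm L.nrm_single hx (hsub i) (fun j => hp (N i j))
      (by linarith [L.epsNorm_nonneg xs])
      ((L.epsNorm_comp_le he hp (hmono i)).trans (le_add_of_nonneg_right zero_le_one))
  have hterm : ∀ i j, xs (N i j) |u (N i j)| = |a i| * xs (N i j) |x j| := fun i j => by
    rw [hu, abs_smul_of_nonneg _ (hx0 j), abs_of_nonneg (hx0 j), map_smul, smul_eq_mul]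
  simp only [← tsum_mul_left, ← hterm]
  refine hasSum_of_bijective_sigma hN (fun m => hp m _ (abs_nonneg _))
    (fun i => by simpa only [hterm] using (hx _ (hsub i) fun j => hp (N i j)).mul_left |a i|) ?_
  simp only [hterm, tsum_mul_left]
  exact (ha.mul_right _).of_nonneg_of_le
    (fun i => mul_nonneg (abs_nonneg _) (tsum_nonneg fun j => hp _ _ (abs_nonneg _)))
    (fun i => mul_le_mul_of_nonneg_left (hS i) (abs_nonneg _))

lemma piMem_and_piNorm_le_of_placement : L.piMem u ∧ L.piNorm u ≤ L.piNorm x * ∑' i, |a i| := by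
  have hsum := fun xs he hp =>
    L.hasSum_apply_abs_of_placement hx hx0 hmono hN ha hu (xs := xs) he hp
  refine ⟨fun xs he hp => (hsum xs he hp).summable, Real.sSup_le ?_
    (mul_nonneg (L.piNorm_nonneg x) (tsum_nonneg fun i => abs_nonneg _))⟩
  rintro r ⟨xs, he, hp, hn, rfl⟩
  have hS : ∀ i, |a i| * ∑' j, xs (N i j) |x j| ≤ |a i| * L.piNorm x := fun i => by
    gcongr
    simpa using L.tsum_apply_abs_le_mul_piNorm L.nrm_single hx (L.epsMem_comp he (hmono i))
      (fun j => hp (N i j)) one_pos ((L.epsNorm_comp_le he hp (hmono i)).trans hn)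
  rw [(hsum xs he hp).tsum_eq, mul_comm, ← tsum_mul_right]
  exact Summable.tsum_le_tsum hS ((ha.mul_right _).of_nonneg_of_le
    (fun i => mul_nonneg (abs_nonneg _) (tsum_nonneg fun j => hp _ _ (abs_nonneg _))) hS)
    (ha.mul_right _)

end Placement

end InvariantSeqLattice

theorem mother_vector_operator_general
    {E : Type*} [NormedAddCommGroup E] [Lattice E] [IsOrderedAddMonoid E] [HasSolidNorm E]
      [NormedSpace ℝ E] [PosSMulStrictMono ℝ E]
    [CompleteSpace E]
    (L : InvariantSeqLattice)
    (x : ℕ → E) (hxmem : L.toSeqBanachLattice.piMem x) (hxpos : ∀ j, 0 ≤ x j)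
    (hxne : ∀ j, x j ≠ 0)
    (N : ℕ → ℕ → ℕ) (hmono : ∀ i, StrictMono (N i))
    (hdisj : ∀ i i', i ≠ i' → Disjoint (Set.range (N i)) (Set.range (N i')))
    (hcover : (⋃ i, Set.range (N i)) = Set.univ)
    (y : ℕ → ℕ → E) (hy : ∀ i j, y i (N i j) = x j)
    (hy0 : ∀ i m, m ∉ Set.range (N i) → y i m = 0) :
    ∀ T : (ℕ → ℝ) → (ℕ → E),
      (∀ a : ℕ → ℝ, Summable (fun i => |a i|) → T a = fun m => ∑' i, a i • y i m) →
      (∀ a : ℕ → ℝ, Summable (fun i => |a i|) →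
        L.toSeqBanachLattice.piMem (T a) ∧
        L.toSeqBanachLattice.piNorm (T a) ≤
          L.toSeqBanachLattice.piNorm x * ∑' i, |a i|) ∧
      (∀ a b : ℕ → ℝ, Summable (fun i => |a i|) → Summable (fun i => |b i|) →
        T (a + b) = T a + T b) ∧
      (∀ (r : ℝ) (a : ℕ → ℝ), Summable (fun i => |a i|) → T (r • a) = r • T a) ∧
      (∀ a b : ℕ → ℝ, Summable (fun i => |a i|) → Summable (fun i => |b i|) →
        T a = T b → a = b) ∧
      (∀ a b : ℕ → ℝ, Summable (fun i => |a i|) → Summable (fun i => |b i|) →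
        T (a ⊓ b) = T a ⊓ T b) := by
  intro T hT
  have hN := bijective_sigma_of_partition (fun i => (hmono i).injective) hdisj hcover
  have hTN : ∀ a, Summable (fun i => |a i|) → ∀ i j, T a (N i j) = a i • x j := fun a ha i j => by
    rw [hT a ha]
    exact tsum_smul_apply_of_disjoint hdisj hy hy0 a i j
  have hext : ∀ f g : ℕ → E, (∀ i j, f (N i j) = g (N i j)) → f = g := fun f g h =>
    funext fun m => by
      obtain ⟨⟨i, j⟩, rfl⟩ := hN.2 m
      exact h i j
  refine ⟨fun a ha => L.piMem_and_piNorm_le_of_placement hxmem hxpos hmono hN ha (hTN a ha),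
    fun a b ha hb => ?_, fun r a ha => ?_, fun a b ha hb hab => ?_, fun a b ha hb => ?_⟩
  · have hab : Summable fun i => |(a + b) i| :=
      (ha.add hb).of_nonneg_of_le (fun _ => abs_nonneg _) fun i => abs_add_le _ _
    exact hext _ _ fun i j => by simp only [hTN _ hab, hTN a ha, hTN b hb, Pi.add_apply, add_smul]
  · have hra : Summable fun i => |(r • a) i| := by simpa [abs_mul] using ha.mul_left |r|
    exact hext _ _ fun i j => by
      simp only [hTN _ hra, hTN a ha, Pi.smul_apply, smul_eq_mul, mul_smul]
  · funext i
    exact smul_left_injective ℝ (hxne 0) <| by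
      simpa only [hTN a ha, hTN b hb] using congrFun hab (N i 0)
  · have hab : Summable fun i => |(a ⊓ b) i| :=
      (ha.add hb).of_nonneg_of_le (fun _ => abs_nonneg _) fun i =>
        abs_min_le_max_abs_abs.trans (max_le_add_of_nonneg (abs_nonneg _) (abs_nonneg _))
    exact hext _ _ fun i j => by
      simp only [hTN _ hab, hTN a ha, hTN b hb, Pi.inf_apply, inf_smul_of_nonneg _ _ (hxpos j)]

/-- Let `E` be a Banach lattice, `x = (x_j) ∈ λ_π(E)⁺` with `x_j ≠ 0` for all `j`, and
`ℕ = ⋃_i ℕ_i` a partition into pairwise disjoint infinite sets, `ℕ_i` enumerated by the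
strictly monotone map `N i`. Let `y_i` be the sequence with `x_j` in coordinate `N i j`
and `0` elsewhere. Then `T : ℓ_1 → λ_π(E)`, `T((a_i)) = Σ_i a_i y_i`, is a well-defined
injective bounded linear operator and a Riesz homomorphism (so the closure of its range
is a closed infinite-dimensional sublattice of `λ_π(E)`). -/
theorem mother_vector_operator
    {E : Type*} [NormedAddCommGroup E] [Lattice E] [IsOrderedAddMonoid E] [HasSolidNorm E]
      [NormedSpace ℝ E] [PosSMulStrictMono ℝ E] [PosSMulReflectLT ℝ E]
    [CompleteSpace E]
    (L : InvariantSeqLattice)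
    (x : ℕ → E) (hxmem : L.toSeqBanachLattice.piMem x) (hxpos : ∀ j, 0 ≤ x j)
    (hxne : ∀ j, x j ≠ 0)
    (N : ℕ → ℕ → ℕ) (hmono : ∀ i, StrictMono (N i))
    (hdisj : ∀ i i', i ≠ i' → Disjoint (Set.range (N i)) (Set.range (N i')))
    (hcover : (⋃ i, Set.range (N i)) = Set.univ)
    (y : ℕ → ℕ → E) (hy : ∀ i j, y i (N i j) = x j)
    (hy0 : ∀ i m, m ∉ Set.range (N i) → y i m = 0) :
    ∀ T : (ℕ → ℝ) → (ℕ → E),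
      (∀ a : ℕ → ℝ, Summable (fun i => |a i|) → T a = fun m => ∑' i, a i • y i m) →
      (∀ a : ℕ → ℝ, Summable (fun i => |a i|) →
        L.toSeqBanachLattice.piMem (T a) ∧
        L.toSeqBanachLattice.piNorm (T a) ≤
          L.toSeqBanachLattice.piNorm x * ∑' i, |a i|) ∧
      (∀ a b : ℕ → ℝ, Summable (fun i => |a i|) → Summable (fun i => |b i|) →
        T (a + b) = T a + T b) ∧
      (∀ (r : ℝ) (a : ℕ → ℝ), Summable (fun i => |a i|) → T (r • a) = r • T a) ∧
      (∀ a b : ℕ → ℝ, Summable (fun i => |a i|) → Summable (fun i => |b i|) →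
        T a = T b → a = b) ∧
      (∀ a b : ℕ → ℝ, Summable (fun i => |a i|) → Summable (fun i => |b i|) →
        T (a ⊓ b) = T a ⊓ T b) :=
  mother_vector_operator_general L x hxmem hxpos hxne N hmono hdisj hcover y hy hy0
end
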